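/- Let p, q : ℝ^d → (0,∞) be smooth strictly positive probability densities with scores s_p = ∇ log p and s_q = ∇ log q, let γ > 0, and let v : ℝ^d → ℝ^d be a smooth compactly supported vector field. Let q_ε be the density of the pushforward of q under T_ε(x) = x + ε v(x), and define the γ-divergence D_γ(p‖q) = (1/γ)∫ p(x)[(p(x)/‖p‖_{γ+1})^γ − (q(x)/‖q‖_{γ+1})^γ] dx, where ‖q‖_{γ+1} = (∫ q^{γ+1})^{1/(γ+1)}. Define the escort densities p_γ(x) = p(x)q(x)^γ / ∫ p q^γ and q_{γ+1}(x) = q(x)^{γ+1} / ∫ q^{γ+1}, and the constant C_γ(q) = (∫ q^{γ+1} dx)^{−γ/(γ+1)}. Assume E_{p_γ}[⟨s_q, v⟩] ≠ 0. Then d/dε D_γ(p‖q_ε)|_{ε=0} = C_γ(q) · E_p[A_q^{(γ)} v] holds if and only if E_{p_γ}[⟨s_q, v⟩] = E_{q_{γ+1}}[⟨s_q, v⟩]. -/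

import Mathlib

open MeasureTheory Real
open scoped RealInnerProductSpace

/-- Divergence of a vector field on `ℝ^d` (trace of the Jacobian). -/
noncomputable def divg {d : ℕ} (f : EuclideanSpace ℝ (Fin d) → EuclideanSpace ℝ (Fin d))
    (x : EuclideanSpace ℝ (Fin d)) : ℝ :=
  ∑ i, fderiv ℝ f x (EuclideanSpace.single i 1) i

/-- Score function `s_q = ∇ log q`. -/
noncomputable def score {d : ℕ} (q : EuclideanSpace ℝ (Fin d) → ℝ)
    (x : EuclideanSpace ℝ (Fin d)) : EuclideanSpace ℝ (Fin d) :=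
  gradient (fun y => Real.log (q y)) x

/-- Jacobian matrix `∇v(x)` of a vector field `v` at `x`. -/
noncomputable def jacobian {d : ℕ} (v : EuclideanSpace ℝ (Fin d) → EuclideanSpace ℝ (Fin d))
    (x : EuclideanSpace ℝ (Fin d)) : Matrix (Fin d) (Fin d) ℝ :=
  Matrix.of fun i j => fderiv ℝ v x (EuclideanSpace.single j 1) i

/-- Density of the pushforward of `q` under `T_ε(x) = x + ε v(x)` (to first order). -/
noncomputable def pushDensity {d : ℕ} (q : EuclideanSpace ℝ (Fin d) → ℝ)
    (v : EuclideanSpace ℝ (Fin d) → EuclideanSpace ℝ (Fin d)) (ε : ℝ)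
    (x : EuclideanSpace ℝ (Fin d)) : ℝ :=
  q (x - ε • v x) * ((1 : Matrix (Fin d) (Fin d) ℝ) - ε • jacobian v x).det

/-- The `γ`-divergence
`D_γ(p‖q) = (1/γ)∫ p [(p/‖p‖_{γ+1})^γ − (q/‖q‖_{γ+1})^γ]` with
`‖q‖_{γ+1} = (∫ q^{γ+1})^{1/(γ+1)}`. -/
noncomputable def gammaDiv {d : ℕ} (γ : ℝ) (p q : EuclideanSpace ℝ (Fin d) → ℝ) : ℝ :=
  (1 / γ) * ∫ x, p x *
    ((p x / (∫ y, p y ^ (γ + 1)) ^ (1 / (γ + 1))) ^ γ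
      - (q x / (∫ y, q y ^ (γ + 1)) ^ (1 / (γ + 1))) ^ γ)


open Polynomial

noncomputable def detDeriv {d : ℕ} (A : Matrix (Fin d) (Fin d) ℝ) (t : ℝ) : ℝ :=
  ∑ σ : Equiv.Perm (Fin d), ((Equiv.Perm.sign σ : ℤ) : ℝ) *
    ∑ i, (∏ j ∈ Finset.univ.erase i, ((1 : Matrix (Fin d) (Fin d) ℝ) - t • A) (σ j) j) *
      (-(A (σ i) i))

lemma hasDerivAt_det_one_sub_smul {d : ℕ} (A : Matrix (Fin d) (Fin d) ℝ) (t : ℝ) :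
    HasDerivAt (fun s : ℝ => ((1 : Matrix (Fin d) (Fin d) ℝ) - s • A).det) (detDeriv A t) t := by
  have h : ∀ s : ℝ, ((1 : Matrix (Fin d) (Fin d) ℝ) - s • A).det
      = ∑ σ : Equiv.Perm (Fin d), ((Equiv.Perm.sign σ : ℤ) : ℝ) *
          ∏ i, ((1 : Matrix (Fin d) (Fin d) ℝ) - s • A) (σ i) i := by
    intro s
    rw [Matrix.det_apply]
    congr 1
    ext σ
    rw [← zsmul_eq_mul]
    norm_cast
  have hmain : HasDerivAt (fun s : ℝ => ∑ σ : Equiv.Perm (Fin d), ((Equiv.Perm.sign σ : ℤ) : ℝ) *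
      ∏ i, ((1 : Matrix (Fin d) (Fin d) ℝ) - s • A) (σ i) i) (detDeriv A t) t := by
    apply HasDerivAt.fun_sum
    intro σ _
    apply HasDerivAt.const_mul
    have hentry : ∀ j : Fin d, HasDerivAt
        (fun s : ℝ => ((1 : Matrix (Fin d) (Fin d) ℝ) - s • A) (σ j) j) (-(A (σ j) j)) t := by
      intro j
      simp only [Matrix.sub_apply, Matrix.smul_apply, smul_eq_mul]
      simpa using ((hasDerivAt_id t).mul_const (A (σ j) j)).const_sub
        (((1 : Matrix (Fin d) (Fin d) ℝ)) (σ j) j)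
    simpa [smul_eq_mul, mul_comm] using HasDerivAt.fun_finsetProd (u := Finset.univ)
      (f := fun j (s : ℝ) => ((1 : Matrix (Fin d) (Fin d) ℝ) - s • A) (σ j) j)
      (f' := fun j => -(A (σ j) j)) (fun j _ => hentry j)
  exact hmain.congr_of_eventuallyEq (Filter.Eventually.of_forall h)

lemma hasDerivAt_det_zero {d : ℕ} (A : Matrix (Fin d) (Fin d) ℝ) :
    HasDerivAt (fun s : ℝ => ((1 : Matrix (Fin d) (Fin d) ℝ) - s • A).det) (-A.trace) 0 := by
  have h : ∀ s : ℝ, ((1 : Matrix (Fin d) (Fin d) ℝ) - s • A).det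
      = 1 + (-A).trace * s + ((1 + (X : ℝ[X]) • (-A).map C).det).divX.divX.eval s * s ^ 2 := by
    intro s
    rw [show (1 : Matrix (Fin d) (Fin d) ℝ) - s • A = 1 + s • (-A) by
      rw [smul_neg, sub_eq_add_neg]]
    exact Matrix.det_one_add_smul s (-A)
  have h2 : HasDerivAt (fun s : ℝ => 1 + (-A).trace * s
      + ((1 + (X : ℝ[X]) • (-A).map C).det).divX.divX.eval s * s ^ 2) (-A.trace) 0 := by
    have hp := Polynomial.hasDerivAt ((1 + (X : ℝ[X]) • (-A).map C).det).divX.divX (0 : ℝ)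
    have := (((hasDerivAt_id (0:ℝ)).const_mul ((-A).trace)).const_add 1).fun_add
      (hp.fun_mul (hasDerivAt_pow 2 (0:ℝ)))
    simpa [Matrix.trace_neg] using this
  exact h2.congr_of_eventuallyEq (Filter.Eventually.of_forall fun s => h s)

lemma detDeriv_zero_eq {d : ℕ} (A : Matrix (Fin d) (Fin d) ℝ) : detDeriv A 0 = -A.trace :=
  (hasDerivAt_det_one_sub_smul A 0).unique (hasDerivAt_det_zero A)

lemma detDeriv_zero_matrix {d : ℕ} (t : ℝ) : detDeriv (0 : Matrix (Fin d) (Fin d) ℝ) t = 0 := by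
  simp [detDeriv]

lemma continuous_detDeriv {d : ℕ} {α : Type*} [TopologicalSpace α]
    {A : α → Matrix (Fin d) (Fin d) ℝ} (hA : Continuous A) :
    Continuous fun p : ℝ × α => detDeriv (A p.2) p.1 := by
  apply continuous_finset_sum
  intro σ _
  apply Continuous.mul continuous_const
  apply continuous_finset_sum
  intro i _
  apply Continuous.mul
  · apply continuous_finset_prod
    intro j _
    simp only [Matrix.sub_apply, Matrix.smul_apply, smul_eq_mul]
    exact Continuous.sub continuous_const
      (continuous_fst.mul ((hA.matrix_elem (σ j) j).comp continuous_snd))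
  · exact ((hA.matrix_elem (σ i) i).comp continuous_snd).neg

variable {d : ℕ}

local notation "E" => EuclideanSpace ℝ (Fin d)

lemma inner_score_eq (q : E → ℝ) (x : E) (u : E) :
    ⟪score q x, u⟫ = fderiv ℝ (fun y => Real.log (q y)) x u := by
  rw [score, gradient, InnerProductSpace.toDual_symm_apply]

lemma trace_jacobian (v : E → E) (x : E) : (jacobian v x).trace = divg v x := by
  simp [Matrix.trace, Matrix.diag, jacobian, divg]

lemma fderiv_log_comp {q : E → ℝ} (hq : Differentiable ℝ q) (hpos : ∀ x, 0 < q x) (x : E) :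
    fderiv ℝ (fun y => Real.log (q y)) x = (q x)⁻¹ • fderiv ℝ q x := by
  have h : HasFDerivAt (fun y => Real.log (q y)) ((q x)⁻¹ • fderiv ℝ q x) x := by
    simpa [Real.hasDerivAt_log (hpos x).ne', ContinuousLinearMap.smulRight, smul_smul, Function.comp_def]
      using (Real.hasDerivAt_log (hpos x).ne').comp_hasFDerivAt x (hq x).hasFDerivAt
  exact h.fderiv

lemma mul_inner_score {q : E → ℝ} (hq : Differentiable ℝ q) (hpos : ∀ x, 0 < q x) (x : E)
    (u : E) : q x * ⟪score q x, u⟫ = fderiv ℝ q x u := by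
  rw [inner_score_eq, fderiv_log_comp hq hpos]
  rw [ContinuousLinearMap.smul_apply, smul_eq_mul, mul_inv_cancel_left₀ (hpos x).ne']

lemma jacobian_eq_zero_of_not_mem {v : E → E} {x : E} (hx : x ∉ tsupport v) :
    jacobian v x = 0 := by
  have h : fderiv ℝ v x = 0 := by
    by_contra h
    exact hx (support_fderiv_subset ℝ (Function.mem_support.2 h))
  ext i j
  simp [jacobian, h]

lemma continuous_jacobian {v : E → E} (hv : ContDiff ℝ (⊤ : ℕ∞) v) : Continuous (jacobian v) := by
  apply continuous_matrix
  intro i j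
  exact (EuclideanSpace.proj i).continuous.comp
    ((hv.continuous_fderiv (by simp)).clm_apply continuous_const)

lemma continuous_det_family {v : E → E} (hv : ContDiff ℝ (⊤ : ℕ∞) v) :
    Continuous fun p : ℝ × E =>
      ((1 : Matrix (Fin d) (Fin d) ℝ) - p.1 • jacobian v p.2).det := by
  apply Continuous.matrix_det
  apply continuous_matrix
  intro i j
  simp only [Matrix.sub_apply, Matrix.smul_apply, smul_eq_mul]
  exact continuous_const.sub (continuous_fst.mul
    (((continuous_jacobian hv).matrix_elem i j).comp continuous_snd))

lemma exists_det_pos {v : E → E} (hv : ContDiff ℝ (⊤ : ℕ∞) v) (hsupp : HasCompactSupport v) :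
    ∃ δ > (0:ℝ), ∀ t : ℝ, |t| < δ → ∀ x : E,
      0 < ((1 : Matrix (Fin d) (Fin d) ℝ) - t • jacobian v x).det := by
  set K := tsupport v with hK
  have hopen : IsOpen {p : ℝ × E | 0 < ((1 : Matrix (Fin d) (Fin d) ℝ)
      - p.1 • jacobian v p.2).det} := isOpen_lt continuous_const (continuous_det_family hv)
  have hsub : ({0} : Set ℝ) ×ˢ K ⊆ {p : ℝ × E | 0 < ((1 : Matrix (Fin d) (Fin d) ℝ)
      - p.1 • jacobian v p.2).det} := by
    rintro ⟨t, x⟩ ⟨ht, -⟩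
    simp only [Set.mem_singleton_iff] at ht
    simp [Set.mem_setOf_eq, ht]
  obtain ⟨u, w, hu, hw, h0u, hKw, huw⟩ := generalized_tube_lemma isCompact_singleton
    hsupp hopen hsub
  obtain ⟨δ, hδ, hball⟩ := Metric.isOpen_iff.1 hu 0 (h0u rfl)
  refine ⟨δ, hδ, fun t ht x => ?_⟩
  by_cases hx : x ∈ K
  · have htu : t ∈ u := hball (by simp only [Metric.mem_ball, Real.dist_eq, sub_zero]; exact ht)
    exact huw (Set.mk_mem_prod htu (hKw hx))
  · rw [jacobian_eq_zero_of_not_mem hx]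
    simp

lemma hasDerivAt_integral_pushDensity {q : E → ℝ} (hq : ContDiff ℝ (⊤ : ℕ∞) q) (hq_pos : ∀ x, 0 < q x)
    {v : E → E} (hv : ContDiff ℝ (⊤ : ℕ∞) v) (hv_supp : HasCompactSupport v)
    {c : ℝ} (hc : 0 < c) {f : E → ℝ} (hf : Continuous f)
    (hfq : Integrable fun x => f x * q x ^ c) :
    HasDerivAt (fun ε : ℝ => ∫ x, f x * pushDensity q v ε x ^ c)
      (∫ x, -c * (f x * (q x ^ c * (fderiv ℝ q x (v x) / q x + divg v x)))) 0 := by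
  obtain ⟨δ, hδ, hdet⟩ := exists_det_pos hv hv_supp
  set K := tsupport v with hK
  set F' : ℝ → E → ℝ := fun t x => f x *
    ((-(fderiv ℝ q (x - t • v x) (v x)) * ((1 : Matrix (Fin d) (Fin d) ℝ) - t • jacobian v x).det
        + q (x - t • v x) * detDeriv (jacobian v x) t) * c *
      (q (x - t • v x) * ((1 : Matrix (Fin d) (Fin d) ℝ) - t • jacobian v x).det) ^ (c - 1))
    with hF'
  -- joint continuity facts
  have hqc : Continuous q := hq.continuous
  have hvc : Continuous v := hv.continuous
  have hmap : Continuous fun p : ℝ × E => p.2 - p.1 • v p.2 :=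
    continuous_snd.sub (continuous_fst.smul (hvc.comp continuous_snd))
  have ha_cont : Continuous fun p : ℝ × E => q (p.2 - p.1 • v p.2) := hqc.comp hmap
  have hb_cont := continuous_det_family (d := d) hv
  have hda_cont : Continuous fun p : ℝ × E => -(fderiv ℝ q (p.2 - p.1 • v p.2) (v p.2)) :=
    (((hq.continuous_fderiv (by simp)).comp hmap).clm_apply (hvc.comp continuous_snd)).neg
  have hdb_cont : Continuous fun p : ℝ × E => detDeriv (jacobian v p.2) p.1 :=
    continuous_detDeriv (continuous_jacobian hv)
  have hpos_ab : ∀ t : ℝ, |t| < δ → ∀ x : E,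
      0 < q (x - t • v x) * ((1 : Matrix (Fin d) (Fin d) ℝ) - t • jacobian v x).det :=
    fun t ht x => mul_pos (hq_pos _) (hdet t ht x)
  -- pointwise derivative
  have h_deriv : ∀ x : E, ∀ t ∈ Metric.ball (0:ℝ) (δ/2),
      HasDerivAt (fun s => f x * pushDensity q v s x ^ c) (F' t x) t := by
    intro x t ht
    have htδ : |t| < δ := by
      rw [Metric.mem_ball, Real.dist_eq, sub_zero] at ht
      linarith
    have hinner : HasDerivAt (fun s : ℝ => x - s • v x) (-(v x)) t := by
      simpa using ((hasDerivAt_id t).smul_const (v x)).const_sub x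
    have ha : HasDerivAt (fun s : ℝ => q (x - s • v x))
        (-(fderiv ℝ q (x - t • v x) (v x))) t := by
      have := (((hq.differentiable (by simp)) (x - t • v x)).hasFDerivAt).comp_hasDerivAt t hinner
      simpa [Function.comp_def] using this
    have hb := hasDerivAt_det_one_sub_smul (jacobian v x) t
    have hab := ha.mul hb
    have habc := hab.rpow_const (p := c) (Or.inl (hpos_ab t htδ x).ne')
    have := habc.const_mul (f x)
    simpa [pushDensity, hF', mul_comm, mul_assoc, mul_left_comm] using this
  -- bound on compact set
  have hS : IsCompact (Metric.closedBall (0:ℝ) (δ/2) ×ˢ K) :=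
    (isCompact_closedBall _ _).prod hv_supp
  have hF'contOn : ContinuousOn (fun p : ℝ × E => F' p.1 p.2)
      (Metric.closedBall (0:ℝ) (δ/2) ×ˢ K) := by
    apply ContinuousOn.mul (hf.comp continuous_snd).continuousOn
    apply ContinuousOn.mul
      (((hda_cont.mul hb_cont).add (ha_cont.mul hdb_cont)).mul continuous_const).continuousOn
    apply ContinuousOn.rpow_const (ha_cont.mul hb_cont).continuousOn
    rintro ⟨t, x⟩ hp
    left
    have htδ : |t| < δ := by
      have := hp.1
      rw [Metric.mem_closedBall, Real.dist_eq, sub_zero] at this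
      linarith
    exact (hpos_ab t htδ x).ne'
  obtain ⟨C, hC⟩ := hS.exists_bound_of_continuousOn hF'contOn
  -- vanishing off K
  have hF'zero : ∀ t : ℝ, ∀ x : E, x ∉ K → F' t x = 0 := by
    intro t x hx
    have hv0 : v x = 0 := image_eq_zero_of_notMem_tsupport hx
    have hj0 : jacobian v x = 0 := jacobian_eq_zero_of_not_mem hx
    simp [hF', hv0, hj0, detDeriv_zero_matrix]
  -- apply dominated convergence
  have hmain := hasDerivAt_integral_of_dominated_loc_of_deriv_le (μ := volume) (x₀ := (0:ℝ))
    (F := fun t x => f x * pushDensity q v t x ^ c) (F' := F')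
    (bound := K.indicator fun _ => C) (Metric.ball_mem_nhds 0 (half_pos hδ))
    ?_ ?_ ?_ ?_ ?_ ?_
  · have heq : ∀ x : E, F' 0 x
        = -c * (f x * (q x ^ c * (fderiv ℝ q x (v x) / q x + divg v x))) := by
      intro x
      have h1 : detDeriv (jacobian v x) 0 = -divg v x := by
        rw [detDeriv_zero_eq, trace_jacobian]
      have h2 : q x ^ c = q x ^ (c - 1) * q x := by
        rw [← Real.rpow_add_one (hq_pos x).ne' (c-1), sub_add_cancel]
      simp only [hF', zero_smul, sub_zero, Matrix.det_one, h1, mul_one, one_mul]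
      rw [h2]
      have hq0 : q x ≠ 0 := (hq_pos x).ne'
      field_simp
      ring
    have := hmain.2
    simpa only [heq] using this
  · apply Filter.Eventually.of_forall
    intro t
    have hcnt : Continuous fun x => f x * pushDensity q v t x ^ c := by
      simp only [pushDensity]
      exact hf.mul (((ha_cont.mul hb_cont).comp (Continuous.prodMk_right t)).rpow_const
        fun x => Or.inr hc.le)
    exact hcnt.aestronglyMeasurable
  · have : (fun x => f x * pushDensity q v 0 x ^ c) = fun x => f x * q x ^ c := by
      funext x
      simp [pushDensity]
    show Integrable (fun x => f x * pushDensity q v 0 x ^ c) volume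
    rw [this]
    exact hfq
  · have : Continuous (F' 0) := by
      apply hf.mul
      apply Continuous.mul
      · exact ((hda_cont.comp (Continuous.prodMk_right 0)).mul
          (hb_cont.comp (Continuous.prodMk_right 0))).add
          ((ha_cont.comp (Continuous.prodMk_right 0)).mul
            (hdb_cont.comp (Continuous.prodMk_right 0))) |>.mul continuous_const
      · apply Continuous.rpow_const
          ((ha_cont.comp (Continuous.prodMk_right 0)).mul (hb_cont.comp (Continuous.prodMk_right 0)))
        intro x
        left
        exact (hpos_ab 0 (by simpa using hδ) x).ne'
    exact this.aestronglyMeasurable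
  · apply Filter.Eventually.of_forall
    intro x t ht
    by_cases hx : x ∈ K
    · rw [Set.indicator_of_mem hx]
      have htc : t ∈ Metric.closedBall (0:ℝ) (δ/2) := Metric.ball_subset_closedBall ht
      exact hC (t, x) (Set.mk_mem_prod htc hx)
    · rw [Set.indicator_of_notMem hx, hF'zero t x hx]
      simp
  · rw [integrable_indicator_iff hv_supp.measurableSet]
    exact integrableOn_const hv_supp.measure_lt_top.ne
  · exact Filter.Eventually.of_forall fun x t ht => h_deriv x t ht


lemma euclidean_sum_single (y : E) :
    ∑ i, y i • EuclideanSpace.single i (1:ℝ) = y := by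
  have h := (EuclideanSpace.basisFun (Fin d) ℝ).sum_repr y
  simpa [EuclideanSpace.basisFun_apply, EuclideanSpace.basisFun_repr] using h

lemma integral_divergence_zero {g : E → ℝ} (hg : ContDiff ℝ (⊤ : ℕ∞) g) {v : E → E}
    (hv : ContDiff ℝ (⊤ : ℕ∞) v) (hv_supp : HasCompactSupport v) :
    ∫ x, (fderiv ℝ g x (v x) + g x * divg v x) = 0 := by
  classical
  set gi : Fin d → E → ℝ := fun i x => g x * v x i with hgi
  have hvi_smooth : ∀ i, ContDiff ℝ (⊤ : ℕ∞) fun x : E => v x i := fun i => by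
    simpa [Function.comp_def] using (EuclideanSpace.proj (𝕜 := ℝ) i).contDiff.comp hv
  have hgi_smooth : ∀ i, ContDiff ℝ (⊤ : ℕ∞) (gi i) := fun i => hg.mul (hvi_smooth i)
  have hgi_supp : ∀ i, HasCompactSupport (gi i) := by
    intro i
    have h1 : HasCompactSupport fun x : E => v x i :=
      hv_supp.comp_left (g := fun y : E => y i) rfl
    exact h1.mul_left
  have hDgi_int : ∀ i, Integrable
      (fun x => fderiv ℝ (gi i) x (EuclideanSpace.single i 1)) volume := by
    intro i
    exact (((hgi_smooth i).continuous_fderiv (by simp)).clm_apply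
      continuous_const).integrable_of_hasCompactSupport
      ((hgi_supp i).fderiv_apply ℝ (EuclideanSpace.single i 1))
  have key : ∀ i : Fin d,
      ∫ x, fderiv ℝ (gi i) x (EuclideanSpace.single i 1) = 0 := by
    intro i
    have h := integral_mul_fderiv_eq_neg_fderiv_mul_of_integrable (μ := volume)
      (f := fun _ : E => (1:ℝ)) (g := gi i) (v := EuclideanSpace.single i 1)
      ?_ ?_ ?_ (fun x _ => differentiableAt_const 1) (fun x _ => (hgi_smooth i).differentiable (by simp) x)
    · simpa using h
    · have : (fun x : E => fderiv ℝ (fun _ : E => (1:ℝ)) x (EuclideanSpace.single i 1)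
          * gi i x) = fun _ => 0 := by
        funext x; simp [fderiv_const]
      rw [this]
      exact integrable_zero _ _ _
    · simpa using hDgi_int i
    · have hInt : Integrable (gi i) volume :=
        ((hgi_smooth i).continuous).integrable_of_hasCompactSupport (hgi_supp i)
      simpa using hInt
  have hpt : ∀ x : E, ∑ i, fderiv ℝ (gi i) x (EuclideanSpace.single i 1)
      = fderiv ℝ g x (v x) + g x * divg v x := by
    intro x
    have hder : ∀ i : Fin d, fderiv ℝ (gi i) x (EuclideanSpace.single i 1)
        = g x * fderiv ℝ v x (EuclideanSpace.single i 1) i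
          + v x i * fderiv ℝ g x (EuclideanSpace.single i 1) := by
      intro i
      have hd1 : DifferentiableAt ℝ g x := (hg.differentiable (by simp)) x
      have hd2 : DifferentiableAt ℝ (fun y : E => v y i) x :=
        ((hvi_smooth i).differentiable (by simp)) x
      rw [hgi]
      simp only []
      rw [fderiv_fun_mul hd1 hd2]
      have hproj : fderiv ℝ (fun y : E => v y i) x
          = (EuclideanSpace.proj i).comp (fderiv ℝ v x) := by
        have hv' : HasFDerivAt v (fderiv ℝ v x) x :=
          ((hv.differentiable (by simp)) x).hasFDerivAt
        exact ((EuclideanSpace.proj (𝕜 := ℝ) i).hasFDerivAt.comp x hv').fderiv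
      simp [hproj]
    rw [Finset.sum_congr rfl fun i _ => hder i, Finset.sum_add_distrib, ← Finset.mul_sum]
    have h2 : ∑ i, v x i * fderiv ℝ g x (EuclideanSpace.single i 1)
        = fderiv ℝ g x (v x) := by
      have h3 : ∑ i, v x i * fderiv ℝ g x (EuclideanSpace.single i 1)
          = fderiv ℝ g x (∑ i, v x i • EuclideanSpace.single i (1:ℝ)) := by
        rw [map_sum]
        simp [smul_eq_mul]
      rw [h3, euclidean_sum_single]
    have hdiv : divg v x = ∑ i, fderiv ℝ v x (EuclideanSpace.single i 1) i := rfl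
    rw [h2, hdiv]
    ring
  calc ∫ x, (fderiv ℝ g x (v x) + g x * divg v x)
      = ∫ x, ∑ i, fderiv ℝ (gi i) x (EuclideanSpace.single i 1) := by
        congr 1; funext x; rw [hpt]
    _ = ∑ i, ∫ x, fderiv ℝ (gi i) x (EuclideanSpace.single i 1) :=
        integral_finset_sum _ fun i _ => hDgi_int i
    _ = 0 := by simp [key]


lemma continuous_pushDensity {q : E → ℝ} (hq : Continuous q) {v : E → E}
    (hv : ContDiff ℝ (⊤ : ℕ∞) v) (ε : ℝ) : Continuous (pushDensity q v ε) := by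
  have heq : pushDensity q v ε = fun x =>
      q (x - ε • v x) * ((1 : Matrix (Fin d) (Fin d) ℝ) - ε • jacobian v x).det := rfl
  rw [heq]
  exact (hq.comp (continuous_id.sub (hv.continuous.const_smul ε))).mul
    ((continuous_det_family hv).comp (Continuous.prodMk_right ε))

lemma pushDensity_of_not_mem {q : E → ℝ} {v : E → E} {x : E} (hx : x ∉ tsupport v) (ε : ℝ) :
    pushDensity q v ε x = q x := by
  have hv0 : v x = 0 := image_eq_zero_of_notMem_tsupport hx
  simp [pushDensity, hv0, jacobian_eq_zero_of_not_mem hx]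

lemma pushDensity_pos {q : E → ℝ} (hq_pos : ∀ x, 0 < q x) {v : E → E} {ε : ℝ} {x : E}
    (hdet : 0 < ((1 : Matrix (Fin d) (Fin d) ℝ) - ε • jacobian v x).det) :
    0 < pushDensity q v ε x := mul_pos (hq_pos _) hdet


/-- the first variation of the `γ`-divergence along the transport
`T_ε = id + ε v` equals `C_γ(q)·E_p[A_q^{(γ)} v]` if and only if the normalizing
condition `E_{p_γ}[⟨s_q, v⟩] = E_{q_{γ+1}}[⟨s_q, v⟩]` holds. -/
theorem gamma_div_first_variation_iff
    (d : ℕ) (p q : EuclideanSpace ℝ (Fin d) → ℝ)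
    (hp_smooth : ContDiff ℝ (⊤ : ℕ∞) p) (hp_pos : ∀ x, 0 < p x) (hp_prob : ∫ x, p x = 1)
    (hq_smooth : ContDiff ℝ (⊤ : ℕ∞) q) (hq_pos : ∀ x, 0 < q x) (hq_prob : ∫ x, q x = 1)
    (γ : ℝ) (hγ : 0 < γ)
    (v : EuclideanSpace ℝ (Fin d) → EuclideanSpace ℝ (Fin d))
    (hv_smooth : ContDiff ℝ (⊤ : ℕ∞) v) (hv_supp : HasCompactSupport v)
    (hp_int : Integrable fun x => p x ^ (γ + 1))
    (hq_int : Integrable fun x => q x ^ (γ + 1))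
    (hpq_int : Integrable fun x => p x * q x ^ γ)
    (hne : (∫ x, p x * q x ^ γ * ⟪score q x, v x⟫) / (∫ x, p x * q x ^ γ) ≠ 0) :
    HasDerivAt (fun ε : ℝ => gammaDiv γ p (pushDensity q v ε))
        ((∫ x, q x ^ (γ + 1)) ^ (-(γ / (γ + 1))) *
          ∫ x, p x * (q x ^ γ * ((γ + 1) * ⟪score q x, v x⟫ + divg v x))) 0
      ↔ (∫ x, p x * q x ^ γ * ⟪score q x, v x⟫) / (∫ x, p x * q x ^ γ)
          = (∫ x, q x ^ (γ + 1) * ⟪score q x, v x⟫) / (∫ x, q x ^ (γ + 1)) := by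
  have hγ1 : (0:ℝ) < γ + 1 := by linarith
  have hq_cont : Continuous q := hq_smooth.continuous
  have hp_cont : Continuous p := hp_smooth.continuous
  have hv_cont : Continuous v := hv_smooth.continuous
  have hq_diff : Differentiable ℝ q := hq_smooth.differentiable (by simp)
  -- score rewriting
  have hs_eq : ∀ x, ⟪score q x, v x⟫ = fderiv ℝ q x (v x) / q x := by
    intro x
    rw [eq_div_iff (hq_pos x).ne', mul_comm]
    exact mul_inner_score hq_diff hq_pos x (v x)
  have hs_cont : Continuous fun x => ⟪score q x, v x⟫ := by
    have : (fun x => ⟪score q x, v x⟫) = fun x => fderiv ℝ q x (v x) / q x :=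
      funext fun x => hs_eq x
    rw [this]
    exact ((hq_smooth.continuous_fderiv (by simp)).clm_apply hv_cont).div hq_cont
      fun x => (hq_pos x).ne'
  have hs_zero : ∀ x, x ∉ tsupport v → ⟪score q x, v x⟫ = 0 := by
    intro x hx
    rw [image_eq_zero_of_notMem_tsupport hx, inner_zero_right]
  have hw_cont : Continuous (divg v) := by
    have : divg v = fun x => (jacobian v x).trace := funext fun x => (trace_jacobian v x).symm
    rw [this]
    exact Continuous.matrix_trace (continuous_jacobian hv_smooth)
  have hw_zero : ∀ x, x ∉ tsupport v → divg v x = 0 := by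
    intro x hx
    rw [← trace_jacobian, jacobian_eq_zero_of_not_mem hx, Matrix.trace_zero]
  have hqγ_cont : Continuous fun x => q x ^ γ :=
    hq_cont.rpow_const fun x => Or.inl (hq_pos x).ne'
  have hqγ1_cont : Continuous fun x => q x ^ (γ+1) :=
    hq_cont.rpow_const fun x => Or.inl (hq_pos x).ne'
  have integrable_supp : ∀ f : EuclideanSpace ℝ (Fin d) → ℝ, Continuous f → (∀ x, x ∉ tsupport v → f x = 0) →
      Integrable f volume := by
    intro f hf h0
    exact hf.integrable_of_hasCompactSupport (HasCompactSupport.intro hv_supp h0)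
  have int_pqs : Integrable (fun x => p x * q x ^ γ * ⟪score q x, v x⟫) volume :=
    integrable_supp _ ((hp_cont.mul hqγ_cont).mul hs_cont)
      (fun x hx => by rw [hs_zero x hx, mul_zero])
  have int_pqw : Integrable (fun x => p x * q x ^ γ * divg v x) volume :=
    integrable_supp _ ((hp_cont.mul hqγ_cont).mul hw_cont)
      (fun x hx => by rw [hw_zero x hx, mul_zero])
  have int_qs : Integrable (fun x => q x ^ (γ+1) * ⟪score q x, v x⟫) volume :=
    integrable_supp _ (hqγ1_cont.mul hs_cont)
      (fun x hx => by rw [hs_zero x hx, mul_zero])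
  have int_qw : Integrable (fun x => q x ^ (γ+1) * divg v x) volume :=
    integrable_supp _ (hqγ1_cont.mul hw_cont)
      (fun x hx => by rw [hw_zero x hx, mul_zero])
  set J := ∫ x, p x * q x ^ γ * ⟪score q x, v x⟫ with hJ
  set K2 := ∫ x, p x * q x ^ γ * divg v x with hK2
  set L := ∫ x, q x ^ (γ+1) * ⟪score q x, v x⟫ with hL
  set Iq := ∫ x, q x ^ (γ+1) with hIq
  set Pq := ∫ x, p x * q x ^ γ with hPq
  -- positivity of Iq, Pq
  have univ_pos : (0:ENNReal) < volume (Set.univ : Set (EuclideanSpace ℝ (Fin d))) :=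
    isOpen_univ.measure_pos volume ⟨0, trivial⟩
  have hIq_pos : 0 < Iq := by
    rw [hIq, integral_pos_iff_support_of_nonneg
      (fun x => (Real.rpow_pos_of_pos (hq_pos x) (γ+1)).le) hq_int]
    have hsup : Function.support (fun x : EuclideanSpace ℝ (Fin d) => q x ^ (γ+1)) = Set.univ := by
      ext x
      simp [Function.mem_support, (Real.rpow_pos_of_pos (hq_pos x) (γ+1)).ne']
    rw [hsup]
    exact univ_pos
  have hPq_pos : 0 < Pq := by
    rw [hPq, integral_pos_iff_support_of_nonneg
      (fun x => (mul_pos (hp_pos x) (Real.rpow_pos_of_pos (hq_pos x) γ)).le) hpq_int]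
    have hsup : Function.support (fun x : EuclideanSpace ℝ (Fin d) => p x * q x ^ γ) = Set.univ := by
      ext x
      simp [Function.mem_support, (hp_pos x).ne',
        (Real.rpow_pos_of_pos (hq_pos x) γ).ne']
    rw [hsup]
    exact univ_pos
  -- divergence theorem: M = -((γ+1) * L)
  have hM : (∫ x, q x ^ (γ+1) * divg v x) = -((γ+1) * L) := by
    have hg_smooth : ContDiff ℝ (⊤ : ℕ∞) fun x : EuclideanSpace ℝ (Fin d) => q x ^ (γ+1) := by
      rw [contDiff_iff_contDiffAt]
      intro x
      exact (Real.contDiffAt_rpow_const_of_ne (hq_pos x).ne').comp x hq_smooth.contDiffAt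
    have hdivzero := integral_divergence_zero hg_smooth hv_smooth hv_supp
    have hfd : ∀ x : EuclideanSpace ℝ (Fin d), fderiv ℝ (fun y : EuclideanSpace ℝ (Fin d) => q y ^ (γ+1)) x (v x)
        = (γ+1) * (q x ^ (γ+1) * ⟪score q x, v x⟫) := by
      intro x
      have hr : HasDerivAt (fun r : ℝ => r ^ (γ+1)) ((γ+1) * q x ^ γ) (q x) := by
        have := Real.hasDerivAt_rpow_const (x := q x) (p := γ+1) (Or.inl (hq_pos x).ne')
        simpa [add_sub_cancel_right] using this
      have hcomp : HasFDerivAt (fun y : EuclideanSpace ℝ (Fin d) => q y ^ (γ+1))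
          (((γ+1) * q x ^ γ) • fderiv ℝ q x) x :=
        hr.comp_hasFDerivAt x (hq_diff x).hasFDerivAt
      rw [hcomp.fderiv]
      have hinner := mul_inner_score hq_diff hq_pos x (v x)
      have hq1 : q x ^ (γ+1) = q x ^ γ * q x := by
        rw [Real.rpow_add_one (hq_pos x).ne' γ]
      simp only [ContinuousLinearMap.coe_smul', Pi.smul_apply, smul_eq_mul]
      rw [← hinner, hq1]
      ring
    have hsplit : ∫ x, (fderiv ℝ (fun y : EuclideanSpace ℝ (Fin d) => q y ^ (γ+1)) x (v x)
        + q x ^ (γ+1) * divg v x)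
        = (γ+1) * L + ∫ x, q x ^ (γ+1) * divg v x := by
      have h1 : (fun x => fderiv ℝ (fun y : EuclideanSpace ℝ (Fin d) => q y ^ (γ+1)) x (v x)
          + q x ^ (γ+1) * divg v x)
          = fun x => (γ+1) * (q x ^ (γ+1) * ⟪score q x, v x⟫) + q x ^ (γ+1) * divg v x := by
        funext x
        rw [hfd]
      rw [h1, integral_add (int_qs.const_mul (γ+1)) int_qw, integral_const_mul, hL]
    rw [hsplit] at hdivzero
    linarith
  -- derivative of H(ε) = ∫ p * pushDensity^γ
  have HA : HasDerivAt (fun ε : ℝ => ∫ x, p x * pushDensity q v ε x ^ γ)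
      (-γ * (J + K2)) 0 := by
    have h := hasDerivAt_integral_pushDensity hq_smooth hq_pos hv_smooth hv_supp hγ
      hp_cont hpq_int
    have hval : (∫ x, -γ * (p x * (q x ^ γ * (fderiv ℝ q x (v x) / q x + divg v x))))
        = -γ * (J + K2) := by
      have h1 : (fun x => -γ * (p x * (q x ^ γ * (fderiv ℝ q x (v x) / q x + divg v x))))
          = fun x => -γ * (p x * q x ^ γ * ⟪score q x, v x⟫ + p x * q x ^ γ * divg v x) := by
        funext x
        rw [hs_eq x]
        ring
      rw [h1, integral_const_mul, integral_add int_pqs int_pqw, hJ, hK2]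
    rw [hval] at h
    exact h
  -- derivative of N(ε) = ∫ pushDensity^(γ+1)
  have HB : HasDerivAt (fun ε : ℝ => ∫ x, pushDensity q v ε x ^ (γ+1))
      (γ * (γ+1) * L) 0 := by
    have hfq1 : Integrable (fun x : EuclideanSpace ℝ (Fin d) => (1:ℝ) * q x ^ (γ+1)) volume := by
      simpa using hq_int
    have h := hasDerivAt_integral_pushDensity hq_smooth hq_pos hv_smooth hv_supp hγ1
      continuous_const hfq1
    have hfun : (fun ε : ℝ => ∫ x, (1:ℝ) * pushDensity q v ε x ^ (γ+1))
        = fun ε : ℝ => ∫ x, pushDensity q v ε x ^ (γ+1) := by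
      funext ε
      simp
    have hval : (∫ x, -(γ+1) * ((1:ℝ) * (q x ^ (γ+1) * (fderiv ℝ q x (v x) / q x + divg v x))))
        = γ * (γ+1) * L := by
      have h1 : (fun x => -(γ+1) * ((1:ℝ) * (q x ^ (γ+1) * (fderiv ℝ q x (v x) / q x + divg v x))))
          = fun x => -(γ+1) * (q x ^ (γ+1) * ⟪score q x, v x⟫ + q x ^ (γ+1) * divg v x) := by
        funext x
        rw [hs_eq x]
        ring
      rw [h1, integral_const_mul, integral_add int_qs int_qw, hM, hL]
      ring
    rw [hfun, hval] at h
    exact h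
  -- setup for the eventual equality
  obtain ⟨δ, hδ, hdet⟩ := exists_det_pos hv_smooth hv_supp
  set e : ℝ := -(γ/(γ+1)) with he
  set Np : ℝ := (∫ y, p y ^ (γ+1)) ^ (1/(γ+1)) with hNp
  have hNp_nonneg : 0 ≤ Np :=
    Real.rpow_nonneg (integral_nonneg fun x => (Real.rpow_pos_of_pos (hp_pos x) _).le) _
  set Cp : ℝ := ∫ x, p x * (p x / Np) ^ γ with hCp
  have hA_int : Integrable (fun x : EuclideanSpace ℝ (Fin d) => p x * (p x / Np) ^ γ) volume := by
    have heq : (fun x : EuclideanSpace ℝ (Fin d) => p x * (p x / Np) ^ γ)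
        = fun x => p x ^ (γ+1) * ((Np ^ γ)⁻¹) := by
      funext x
      rw [Real.div_rpow (hp_pos x).le hNp_nonneg, Real.rpow_add_one (hp_pos x).ne' γ]
      ring
    rw [heq]
    exact hp_int.mul_const _
  have hev : (fun ε : ℝ => gammaDiv γ p (pushDensity q v ε)) =ᶠ[nhds (0:ℝ)]
      fun ε : ℝ => (1/γ) * (Cp - (∫ x, p x * pushDensity q v ε x ^ γ)
        * (∫ x, pushDensity q v ε x ^ (γ+1)) ^ e) := by
    filter_upwards [Metric.ball_mem_nhds (0:ℝ) hδ] with ε hε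
    have hεδ : |ε| < δ := by rw [Metric.mem_ball, Real.dist_eq, sub_zero] at hε; exact hε
    have hpush_pos : ∀ x, 0 < pushDensity q v ε x :=
      fun x => pushDensity_pos hq_pos (hdet ε hεδ x)
    have hpush_cont : Continuous (pushDensity q v ε) :=
      continuous_pushDensity hq_cont hv_smooth ε
    have hpushγ1_cont : Continuous fun x => pushDensity q v ε x ^ (γ+1) :=
      hpush_cont.rpow_const fun x => Or.inl (hpush_pos x).ne'
    have hpushγ_cont : Continuous fun x => pushDensity q v ε x ^ γ :=
      hpush_cont.rpow_const fun x => Or.inl (hpush_pos x).ne'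
    have hNint : Integrable (fun x => pushDensity q v ε x ^ (γ+1)) volume := by
      have hdiff : Integrable
          (fun x => pushDensity q v ε x ^ (γ+1) - q x ^ (γ+1)) volume :=
        integrable_supp _ (hpushγ1_cont.sub hqγ1_cont)
          (fun x hx => by rw [pushDensity_of_not_mem hx]; ring)
      refine (hq_int.add hdiff).congr (Filter.Eventually.of_forall fun x => ?_)
      simp only [Pi.add_apply]
      ring
    have hHint : Integrable (fun x => p x * pushDensity q v ε x ^ γ) volume := by
      have hdiff : Integrable
          (fun x => p x * pushDensity q v ε x ^ γ - p x * q x ^ γ) volume :=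
        integrable_supp _ ((hp_cont.mul hpushγ_cont).sub (hp_cont.mul hqγ_cont))
          (fun x hx => by rw [pushDensity_of_not_mem hx]; ring)
      refine (hpq_int.add hdiff).congr (Filter.Eventually.of_forall fun x => ?_)
      simp only [Pi.add_apply]
      ring
    have hNpos : 0 < ∫ x, pushDensity q v ε x ^ (γ+1) := by
      rw [integral_pos_iff_support_of_nonneg
        (fun x => (Real.rpow_pos_of_pos (hpush_pos x) (γ+1)).le) hNint]
      have hsup : Function.support (fun x : EuclideanSpace ℝ (Fin d) =>
          pushDensity q v ε x ^ (γ+1)) = Set.univ := by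
        ext x
        simp [Function.mem_support, (Real.rpow_pos_of_pos (hpush_pos x) (γ+1)).ne']
      rw [hsup]
      exact univ_pos
    have hstart : gammaDiv γ p (pushDensity q v ε)
        = (1/γ) * ∫ x, p x * ((p x / Np) ^ γ
            - (pushDensity q v ε x / (∫ y, pushDensity q v ε y ^ (γ+1)) ^ (1/(γ+1))) ^ γ) := rfl
    rw [hstart]
    have hBpt : (fun x => p x * ((p x / Np) ^ γ
          - (pushDensity q v ε x / (∫ y, pushDensity q v ε y ^ (γ+1)) ^ (1/(γ+1))) ^ γ))
        = fun x => p x * (p x / Np) ^ γ - (p x * pushDensity q v ε x ^ γ)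
            * (∫ y, pushDensity q v ε y ^ (γ+1)) ^ e := by
      funext x
      have h2 : (pushDensity q v ε x / (∫ y, pushDensity q v ε y ^ (γ+1)) ^ (1/(γ+1))) ^ γ
          = pushDensity q v ε x ^ γ * (∫ y, pushDensity q v ε y ^ (γ+1)) ^ e := by
        rw [Real.div_rpow (hpush_pos x).le (Real.rpow_nonneg hNpos.le _),
          ← Real.rpow_mul hNpos.le, div_eq_mul_inv, ← Real.rpow_neg hNpos.le]
        congr 1
        rw [he]
        ring
      rw [h2]
      ring
    rw [hBpt, integral_sub hA_int (hHint.mul_const _), integral_mul_const, ← hCp]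
  -- derivative at 0 of the model function
  have hH0 : (∫ x, p x * pushDensity q v 0 x ^ γ) = Pq := by
    rw [hPq]
    congr 1
    funext x
    simp [pushDensity]
  have hN0 : (∫ x, pushDensity q v 0 x ^ (γ+1)) = Iq := by
    rw [hIq]
    congr 1
    funext x
    simp [pushDensity]
  have hN0ne : (∫ x, pushDensity q v 0 x ^ (γ+1)) ≠ 0 := by
    rw [hN0]; exact hIq_pos.ne'
  have hΦ : HasDerivAt (fun ε : ℝ => gammaDiv γ p (pushDensity q v ε))
      (Iq ^ e * (J + K2) + γ * Pq * L * Iq ^ (e-1)) 0 := by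
    have h1 := HB.rpow_const (p := e) (Or.inl hN0ne)
    have h4 := ((HA.mul h1).const_sub Cp).const_mul (1/γ)
    rw [hH0, hN0] at h4
    have h5 := h4.congr_of_eventuallyEq hev
    refine h5.congr_deriv ?_
    rw [he]
    have h6 : γ + 1 ≠ 0 := hγ1.ne'
    field_simp
    ring
  have hDsplit : (∫ x, p x * (q x ^ γ * ((γ+1) * ⟪score q x, v x⟫ + divg v x)))
      = (γ+1)*J + K2 := by
    have h1 : (fun x => p x * (q x ^ γ * ((γ+1) * ⟪score q x, v x⟫ + divg v x)))
        = fun x => (γ+1) * (p x * q x ^ γ * ⟪score q x, v x⟫)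
            + p x * q x ^ γ * divg v x := by
      funext x
      ring
    rw [h1, integral_add (int_pqs.const_mul _) int_pqw, integral_const_mul, ← hJ, ← hK2]
  have hIe : Iq ^ e = Iq ^ (e-1) * Iq := by
    rw [← Real.rpow_add_one hIq_pos.ne' (e-1), sub_add_cancel]
  have hIe1_pos : 0 < Iq ^ (e-1) := Real.rpow_pos_of_pos hIq_pos _
  rw [hDsplit]
  constructor
  · intro h
    have huniq := h.unique hΦ
    rw [div_eq_div_iff hPq_pos.ne' hIq_pos.ne']
    rw [hIe] at huniq
    have h5 : γ * Iq^(e-1) * (J * Iq) = γ * Iq^(e-1) * (Pq * L) := by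
      linear_combination huniq
    have h6 := mul_left_cancel₀ (mul_ne_zero hγ.ne' hIe1_pos.ne') h5
    linarith
  · intro hdiv
    rw [div_eq_div_iff hPq_pos.ne' hIq_pos.ne'] at hdiv
    have hDeq : Iq ^ e * ((γ+1)*J + K2)
        = Iq ^ e * (J + K2) + γ * Pq * L * Iq ^ (e-1) := by
      rw [hIe]
      linear_combination (γ * Iq^(e-1)) * hdiv
    rw [hDeq]
    exact hΦ
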